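/- Let A : ℝ → Matrix (Fin J) (Fin J) ℝ and f : ℝ → ℝ be continuous on [s,t], and set Ã(x) = A(x) − f(x)·Id. Then the Peano–Baker series of à satisfies ∏_s^t (Id + Ã(x)dx) = exp(−∫_s^t f(v) dv) · ∏_s^t (Id + A(x)dx). In particular, for an intensity matrix M and constant c ≥ 0, ∏_s^t (Id + [M(x) − c·r(x)·Id] dx) = e^{−c ∫_s^t r(v)dv} ∏_s^t (Id + M(x)dx). -/

import Mathlib

open MeasureTheory intervalIntegral

attribute [local instance] Matrix.linftyOpNormedAddCommGroup Matrix.linftyOpNormedSpace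
  Matrix.linftyOpNormedRing Matrix.linftyOpNormedAlgebra

/-- Iterated integrals of the Peano-Baker series:
`I_0(s,t) = Id`, `I_{m+1}(s,t) = int_s^t I_m(s,x) A(x) dx`. -/
noncomputable def iterInt {ι : Type*} [Fintype ι] [DecidableEq ι]
    (A : ℝ → Matrix ι ι ℝ) : ℕ → ℝ → ℝ → Matrix ι ι ℝ
  | 0, _s, _t => 1
  | m + 1, s, t => ∫ x in s..t, iterInt A m s x * A x

/-- The Peano-Baker series (product integral) of `A` over `(s,t]`. -/
noncomputable def peanoBaker {ι : Type*} [Fintype ι] [DecidableEq ι]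
    (A : ℝ → Matrix ι ι ℝ) (s t : ℝ) : Matrix ι ι ℝ :=
  ∑' m : ℕ, iterInt A m s t

/-! Write `F x = ∫ v in s..x, f v`. The iterated integrals of `A - f • 1` are the Cauchy product
`∑_{k+j=m} ((-F x)^k / k!) • I_j(s,x)` of the exponential series of `-F x` with the iterated
integrals of `A`: by the product rule the right-hand side also satisfies
`J_{m+1}' = J_m (A - f • 1)`, and it vanishes at `x = s`. Summing over `m`, the Cauchy product
formula turns the Peano–Baker series of `A - f • 1` into `exp (-F t) • B(s,t)`. -/

open Set Finset

open scoped Nat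

variable {ι : Type*} [Fintype ι] [DecidableEq ι]

theorem Matrix.linfty_opNorm_one_le : ‖(1 : Matrix ι ι ℝ)‖ ≤ 1 := by
  cases isEmpty_or_nonempty ι
  · simp [Subsingleton.elim (1 : Matrix ι ι ℝ) 0]
  · exact norm_one.le

variable {A B : ℝ → Matrix ι ι ℝ} {s t : ℝ}

theorem iterInt_succ_self (A : ℝ → Matrix ι ι ℝ) (m : ℕ) (s : ℝ) :
    iterInt A (m + 1) s s = 0 :=
  integral_same

theorem continuous_iterInt (hA : Continuous A) (m : ℕ) (s : ℝ) :
    Continuous (iterInt A m s) := by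
  induction m with
  | zero => exact continuous_const
  | succ m ih => exact continuous_primitive (fun a b => (ih.mul hA).intervalIntegrable a b) s

theorem hasDerivAt_iterInt_succ (hA : Continuous A) (m : ℕ) (s x : ℝ) :
    HasDerivAt (iterInt A (m + 1) s) (iterInt A m s x * A x) x :=
  ((continuous_iterInt hA m s).mul hA).integral_hasStrictDerivAt s x |>.hasDerivAt

theorem differentiable_iterInt (hA : Continuous A) (m : ℕ) (s : ℝ) :
    Differentiable ℝ (iterInt A m s) := by
  cases m with
  | zero => exact differentiable_const _
  | succ m => exact fun x => (hasDerivAt_iterInt_succ hA m s x).differentiableAt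

theorem norm_iterInt_le {C : ℝ} (hC : ∀ u ∈ Icc s t, ‖A u‖ ≤ C) (m : ℕ) {x : ℝ}
    (hx : x ∈ Icc s t) : ‖iterInt A m s x‖ ≤ (C * (x - s)) ^ m / m ! := by
  induction m generalizing x with
  | zero => simpa [iterInt] using Matrix.linfty_opNorm_one_le
  | succ m ih =>
    have hbound : ∀ u ∈ Ioc s x,
        ‖iterInt A m s u * A u‖ ≤ C ^ (m + 1) * (u - s) ^ m / m ! := fun u hu => by
        have hu' : u ∈ Icc s t := ⟨hu.1.le, hu.2.trans hx.2⟩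
        calc ‖iterInt A m s u * A u‖ ≤ ‖iterInt A m s u‖ * ‖A u‖ := norm_mul_le _ _
          _ ≤ (C * (u - s)) ^ m / m ! * C :=
            mul_le_mul (ih hu') (hC u hu') (norm_nonneg _) ((norm_nonneg _).trans (ih hu'))
          _ = C ^ (m + 1) * (u - s) ^ m / m ! := by rw [mul_pow]; ring
    calc ‖iterInt A (m + 1) s x‖ ≤ ∫ u in s..x, C ^ (m + 1) * (u - s) ^ m / m ! :=
          norm_integral_le_of_norm_le hx.1 (Filter.Eventually.of_forall hbound)
            (by apply Continuous.intervalIntegrable; fun_prop)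
      _ = (C * (x - s)) ^ (m + 1) / (m + 1)! := by
          simp only [integral_comp_sub_right (fun u => C ^ (m + 1) * u ^ m / m !), sub_self,
            intervalIntegral.integral_div, intervalIntegral.integral_const_mul, integral_pow]
          rw [Nat.factorial_succ, mul_pow]
          push_cast
          field_simp
          ring

theorem summable_norm_iterInt (hA : ContinuousOn A (Icc s t)) (hst : s ≤ t) :
    Summable fun m => ‖iterInt A m s t‖ := by
  obtain ⟨C, hC⟩ := isCompact_Icc.exists_bound_of_continuousOn hA
  exact .of_nonneg_of_le (fun m => norm_nonneg _)
    (fun m => norm_iterInt_le hC m ⟨hst, le_rfl⟩) (Real.summable_pow_div_factorial _)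

theorem iterInt_congr (h : EqOn A B (Icc s t)) (m : ℕ) {x : ℝ} (hx : x ∈ Icc s t) :
    iterInt A m s x = iterInt B m s x := by
  induction m generalizing x with
  | zero => rfl
  | succ m ih =>
    refine integral_congr fun u hu => ?_
    rw [uIcc_of_le hx.1] at hu
    have hu' : u ∈ Icc s t := ⟨hu.1, hu.2.trans hx.2⟩
    simp only [ih hu', h hu']

theorem peanoBaker_congr (h : EqOn A B (Icc s t)) (hst : s ≤ t) :
    peanoBaker A s t = peanoBaker B s t :=
  tsum_congr fun m => iterInt_congr h m ⟨hst, le_rfl⟩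

variable {f F : ℝ → ℝ}

noncomputable def shiftedIterInt (A : ℝ → Matrix ι ι ℝ) (F : ℝ → ℝ) (m : ℕ) (s x : ℝ) :
    Matrix ι ι ℝ :=
  ∑ p ∈ antidiagonal m, ((-F x) ^ p.1 / p.1 !) • iterInt A p.2 s x

theorem continuous_shiftedIterInt (hA : Continuous A) (hF : Continuous F) (m : ℕ) (s : ℝ) :
    Continuous (shiftedIterInt A F m s) :=
  continuous_finsetSum _ fun p _ =>
    (hF.neg.pow p.1 |>.div_const _).smul (continuous_iterInt hA p.2 s)

theorem shiftedIterInt_succ_self (A : ℝ → Matrix ι ι ℝ) (hFs : F s = 0) (m : ℕ) :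
    shiftedIterInt A F (m + 1) s s = 0 := by
  simp [shiftedIterInt, Nat.sum_antidiagonal_succ, iterInt_succ_self, hFs]

theorem hasDerivAt_neg_pow_succ_div_factorial {x : ℝ} (hF : HasDerivAt F (f x) x) (k : ℕ) :
    HasDerivAt (fun y => (-F y) ^ (k + 1) / (k + 1)!) (-f x * ((-F x) ^ k / k !)) x := by
  refine ((hF.neg.pow (k + 1)).div_const ((k + 1)! : ℝ)).congr_deriv ?_
  rw [Pi.neg_apply, Nat.factorial_succ]
  push_cast
  field_simp

theorem hasDerivAt_shiftedIterInt_succ (hA : Continuous A) (hF : ∀ x, HasDerivAt F (f x) x)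
    (m : ℕ) (s x : ℝ) :
    HasDerivAt (shiftedIterInt A F (m + 1) s) (shiftedIterInt A F m s x * (A x - f x • 1)) x := by
  have hc : ∀ k, DifferentiableAt ℝ (fun y => (-F y) ^ k / k !) x := fun k =>
    (((hF x).differentiableAt.neg).pow k).div_const _
  refine (HasDerivAt.fun_sum fun (p : ℕ × ℕ) _ =>
    (hc p.1).hasDerivAt.smul (differentiable_iterInt hA p.2 s x).hasDerivAt).congr_deriv ?_
  rw [sum_add_distrib, Nat.sum_antidiagonal_succ', Nat.sum_antidiagonal_succ]
  simp only [(hasDerivAt_neg_pow_succ_div_factorial (hF x) _).deriv,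
    (hasDerivAt_iterInt_succ hA _ s x).deriv]
  simp [shiftedIterInt, iterInt, mul_sub, sum_mul, mul_smul, smul_sum, ← sub_eq_add_neg]

theorem iterInt_sub_smul_one (hA : Continuous A) (hf : Continuous f)
    (hF : ∀ x, HasDerivAt F (f x) x) (hFs : F s = 0) (m : ℕ) (x : ℝ) :
    iterInt (fun u => A u - f u • 1) m s x = shiftedIterInt A F m s x := by
  induction m generalizing x with
  | zero => simp [iterInt, shiftedIterInt]
  | succ m ih =>
    have hFc : Continuous F := continuous_iff_continuousAt.2 fun y => (hF y).continuousAt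
    calc iterInt (fun u => A u - f u • 1) (m + 1) s x
        = ∫ u in s..x, shiftedIterInt A F m s u * (A u - f u • 1) := by simp only [iterInt, ih]
      _ = shiftedIterInt A F (m + 1) s x := by
        rw [integral_eq_sub_of_hasDerivAt
          (fun y _ => hasDerivAt_shiftedIterInt_succ hA hF m s y)
          (((continuous_shiftedIterInt hA hFc m s).mul
            (hA.sub (hf.smul continuous_const))).intervalIntegrable _ _),
          shiftedIterInt_succ_self A hFs, sub_zero]

theorem peanoBaker_sub_smul_one_of_continuous (hA : Continuous A) (hf : Continuous f)
    (hst : s ≤ t) :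
    peanoBaker (fun x => A x - f x • 1) s t =
      Real.exp (-∫ v in s..t, f v) • peanoBaker A s t := by
  set F : ℝ → ℝ := fun x => ∫ v in s..x, f v
  have hF : ∀ x, HasDerivAt F (f x) x := fun x => (hf.integral_hasStrictDerivAt s x).hasDerivAt
  have hexp : HasSum (fun k => (-F t) ^ k / k !) (Real.exp (-F t)) := by
    rw [Real.exp_eq_exp_ℝ, NormedSpace.exp_eq_tsum_div]
    exact (Real.summable_pow_div_factorial _).hasSum
  have hexp_norm : Summable fun k => ‖((-F t) ^ k / k !) • (1 : Matrix ι ι ℝ)‖ :=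
    .of_nonneg_of_le (fun _ => norm_nonneg _) (fun _ => norm_smul_le _ _)
      ((Real.summable_pow_div_factorial ‖-F t‖).congr (fun k => by simp [norm_pow])
        |>.mul_right _)
  calc peanoBaker (fun x => A x - f x • 1) s t
      = ∑' m, ∑ p ∈ antidiagonal m,
          ((-F t) ^ p.1 / p.1 !) • (1 : Matrix ι ι ℝ) * iterInt A p.2 s t := by
        refine tsum_congr fun m => ?_
        rw [iterInt_sub_smul_one hA hf hF integral_same, shiftedIterInt]
        simp only [smul_mul_assoc, one_mul]
    _ = (∑' k, ((-F t) ^ k / k !) • (1 : Matrix ι ι ℝ)) * peanoBaker A s t :=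
        (tsum_mul_tsum_eq_tsum_sum_antidiagonal_of_summable_norm hexp_norm
          (summable_norm_iterInt hA.continuousOn hst)).symm
    _ = Real.exp (-F t) • peanoBaker A s t := by
        rw [hexp.summable.tsum_smul_const, hexp.tsum_eq, smul_mul_assoc, one_mul]

theorem ContinuousOn.exists_continuous_eqOn_Icc {E : Type*} [TopologicalSpace E] {g : ℝ → E}
    (hst : s ≤ t) (hg : ContinuousOn g (Icc s t)) :
    ∃ g', Continuous g' ∧ EqOn g g' (Icc s t) :=
  ⟨IccExtend hst ((Icc s t).domRestrict g), hg.domRestrict.Icc_extend',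
    fun _ hx => (IccExtend_of_mem hst ((Icc s t).domRestrict g) hx).symm⟩

theorem peanoBaker_sub_smul_one (hA : ContinuousOn A (Icc s t)) (hf : ContinuousOn f (Icc s t))
    (hst : s ≤ t) :
    peanoBaker (fun x => A x - f x • 1) s t =
      Real.exp (-∫ v in s..t, f v) • peanoBaker A s t := by
  obtain ⟨A', hA', hAA'⟩ := hA.exists_continuous_eqOn_Icc hst
  obtain ⟨f', hf', hff'⟩ := hf.exists_continuous_eqOn_Icc hst
  have hshift : EqOn (fun x => A x - f x • 1) (fun x => A' x - f' x • 1) (Icc s t) :=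
    fun x hx => by simp only [hAA' hx, hff' hx]
  rw [peanoBaker_congr hshift hst,
    peanoBaker_congr hAA' hst, integral_congr (uIcc_of_le hst ▸ hff')]
  exact peanoBaker_sub_smul_one_of_continuous hA' hf' hst

/-- shifting a matrix function by a scalar multiple of the identity factors
out of the product integral as an exponential:
`∏_s^t (Id + [A(x) − f(x)·Id] dx) = exp(−∫_s^t f) · ∏_s^t (Id + A(x) dx)`.
In particular, for an intensity matrix `M` and a constant `c ≥ 0`,
`∏_s^t (Id + [M(x) − c·r(x)·Id] dx) = e^{−c ∫_s^t r} ∏_s^t (Id + M(x) dx)`. -/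
theorem peanoBaker_scalar_shift {J : ℕ}
    (A : ℝ → Matrix (Fin J) (Fin J) ℝ) (f : ℝ → ℝ) (s t : ℝ) (hst : s ≤ t)
    (hA : ContinuousOn A (Set.Icc s t)) (hf : ContinuousOn f (Set.Icc s t)) :
    (peanoBaker (fun x => A x - f x • (1 : Matrix (Fin J) (Fin J) ℝ)) s t
      = Real.exp (-∫ v in s..t, f v) • peanoBaker A s t) ∧
    (∀ (M : ℝ → Matrix (Fin J) (Fin J) ℝ) (r : ℝ → ℝ) (c : ℝ), 0 ≤ c →
      ContinuousOn M (Set.Icc s t) → ContinuousOn r (Set.Icc s t) →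
      peanoBaker (fun x => M x - (c * r x) • (1 : Matrix (Fin J) (Fin J) ℝ)) s t
        = Real.exp (-(c * ∫ v in s..t, r v)) • peanoBaker M s t) := by
  refine ⟨peanoBaker_sub_smul_one hA hf hst, fun M r c _ hM hr => ?_⟩
  rw [← intervalIntegral.integral_const_mul]
  exact peanoBaker_sub_smul_one hM (continuousOn_const.mul hr) hst
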